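/- The Poisson transform of the average trie size equals the Poissonized trie size: for every x ≥ 0, ∑_{n≥0} e^{−x} (x^n/n!) · t_n = ∑_{w∈𝒜^*} [1 − (1 + x P(w)) e^{−x P(w)}], where t_n = ∑_{w∈𝒜^*} [1 − (1−P(w))^n − n P(w)(1−P(w))^{n−1}] (with t_0 = t_1 = 0). -/

import Mathlib

/-!
For a word `w` of probability `p`, `1 - (1 - p)^n - n p (1 - p)^(n - 1)` is the probability that
at least two of `n` independent strings begin with `w`. Its Poisson transform is computed
termwise from `∑ e^{-x} x^n/n! · y^n = e^{x(y-1)}` and its derivative in `y`, giving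
`1 - (1 + xp) e^{-xp}`. All terms are nonnegative, so the sums over `n` and over `w` may be
interchanged (Tonelli); the only analytic input is that `∑_w P(w)^2` converges, which holds
because `P(w) ≤ M^|w|` for some `M < 1` while the words of each length carry total mass `1`.
-/

/-- `chainProb P b w` is the probability `P_b(w)` of emitting the word `w` when the
Markov source with transition probabilities `P a b = P(a|b)` is started from state `b`. -/
def chainProb {A : Type*} (P : A → A → ℝ) : A → List A → ℝ
  | _, [] => 1
  | b, a :: w => P a b * chainProb P a w

/-- `wordProb π P w` is the stationary probability `P(w)` of the word `w`. -/
def wordProb {A : Type*} (π : A → ℝ) (P : A → A → ℝ) : List A → ℝ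
  | [] => 1
  | a :: w => π a * chainProb P a w

open Finset

lemma hasSum_poisson_mul_pow (x y : ℝ) :
    HasSum (fun n : ℕ => Real.exp (-x) * (x ^ n / n.factorial) * y ^ n)
      (Real.exp (x * (y - 1))) := by
  have h := (NormedSpace.expSeries_div_hasSum_exp (x * y)).mul_left (Real.exp (-x))
  rw [← Real.exp_eq_exp_ℝ, ← Real.exp_add, show -x + x * y = x * (y - 1) by ring] at h
  exact h.congr_fun fun n => by rw [mul_pow]; ring

lemma hasSum_poisson_mul_nat_mul_pow (x y : ℝ) :
    HasSum (fun n : ℕ => Real.exp (-x) * (x ^ n / n.factorial) * (n * y ^ (n - 1)))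
      (x * Real.exp (x * (y - 1))) := by
  rw [← hasSum_nat_add_iff' 1, sum_range_one, Nat.cast_zero, zero_mul, mul_zero, sub_zero]
  refine ((hasSum_poisson_mul_pow x y).mul_left x).congr_fun fun n => ?_
  rw [Nat.factorial_succ, Nat.add_sub_cancel]
  push_cast
  field_simp
  ring

def probAtLeastTwo (n : ℕ) (p : ℝ) : ℝ := 1 - (1 - p) ^ n - n * p * (1 - p) ^ (n - 1)

lemma hasSum_poisson_mul_probAtLeastTwo (x p : ℝ) :
    HasSum (fun n : ℕ => Real.exp (-x) * (x ^ n / n.factorial) * probAtLeastTwo n p)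
      (1 - (1 + x * p) * Real.exp (-(x * p))) := by
  have hone := hasSum_poisson_mul_pow x 1
  have hpow := hasSum_poisson_mul_pow x (1 - p)
  have hderiv := (hasSum_poisson_mul_nat_mul_pow x (1 - p)).mul_left p
  have hval : Real.exp (x * (1 - 1)) - Real.exp (x * (1 - p - 1))
      - p * (x * Real.exp (x * (1 - p - 1))) = 1 - (1 + x * p) * Real.exp (-(x * p)) := by
    rw [sub_self, mul_zero, Real.exp_zero, show x * (1 - p - 1) = -(x * p) by ring]
    ring
  rw [← hval]
  exact ((hone.sub hpow).sub hderiv).congr_fun fun n => by rw [probAtLeastTwo, one_pow]; ring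

lemma probAtLeastTwo_eq_mul_sum (n : ℕ) (p : ℝ) :
    probAtLeastTwo n p = p * ∑ i ∈ range n, ((1 - p) ^ i - (1 - p) ^ (n - 1)) := by
  rw [probAtLeastTwo, sum_sub_distrib, sum_const, card_range, nsmul_eq_mul]
  linear_combination geom_sum_mul (1 - p) n

lemma probAtLeastTwo_nonneg {n : ℕ} {p : ℝ} (hp0 : 0 ≤ p) (hp1 : p ≤ 1) :
    0 ≤ probAtLeastTwo n p := by
  rw [probAtLeastTwo_eq_mul_sum]
  refine mul_nonneg hp0 (sum_nonneg fun i hi => sub_nonneg.2 ?_)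
  exact pow_le_pow_of_le_one (by linarith) (by linarith) (Nat.le_sub_one_of_lt (mem_range.1 hi))

lemma probAtLeastTwo_le {n : ℕ} {p : ℝ} (hp0 : 0 ≤ p) (hp1 : p ≤ 1) :
    probAtLeastTwo n p ≤ n ^ 2 * p ^ 2 := by
  have hterm : ∀ i ∈ range n, (1 - p) ^ i - (1 - p) ^ (n - 1) ≤ n * p := by
    intro i _
    have hbernoulli : 1 + (n - 1 : ℕ) * (-p) ≤ (1 + -p) ^ (n - 1) :=
      one_add_mul_le_pow (by linarith) _
    have hn : ((n - 1 : ℕ) : ℝ) ≤ n := by exact_mod_cast n.sub_le 1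
    have hi : (1 - p) ^ i ≤ 1 := pow_le_one₀ (by linarith) (by linarith)
    rw [← sub_eq_add_neg] at hbernoulli
    nlinarith
  calc probAtLeastTwo n p = p * ∑ i ∈ range n, ((1 - p) ^ i - (1 - p) ^ (n - 1)) :=
        probAtLeastTwo_eq_mul_sum n p
    _ ≤ p * ∑ _i ∈ range n, (n * p) := by gcongr with i hi; exact hterm i hi
    _ = n ^ 2 * p ^ 2 := by rw [sum_const, card_range, nsmul_eq_mul]; ring

lemma tsum_eq_toReal_tsum_ofReal {γ : Type*} {g : γ → ℝ} (hg : ∀ c, 0 ≤ g c)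
    (hsum : Summable g) :
    ∑' c, g c = (∑' c, ENNReal.ofReal (g c)).toReal := by
  rw [← ENNReal.ofReal_tsum_of_nonneg hg hsum, ENNReal.toReal_ofReal (tsum_nonneg hg)]

lemma tsum_ofReal_ne_top {γ : Type*} {g : γ → ℝ} (hg : ∀ c, 0 ≤ g c) (hsum : Summable g) :
    ∑' c, ENNReal.ofReal (g c) ≠ ⊤ := by
  rw [← ENNReal.ofReal_tsum_of_nonneg hg hsum]
  exact ENNReal.ofReal_ne_top

/-- Tonelli for double series of nonnegative reals: unlike `Summable.tsum_comm'`, no joint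
summability is assumed, only that of the inner sums. -/
lemma tsum_comm_of_nonneg {α β : Type*} {f : α → β → ℝ} (hf : ∀ a b, 0 ≤ f a b)
    (hrow : ∀ a, Summable (f a)) (hcol : ∀ b, Summable fun a => f a b) :
    ∑' a, ∑' b, f a b = ∑' b, ∑' a, f a b := by
  calc ∑' a, ∑' b, f a b = ∑' a, (∑' b, ENNReal.ofReal (f a b)).toReal :=
        tsum_congr fun a => tsum_eq_toReal_tsum_ofReal (hf a) (hrow a)
    _ = (∑' a, ∑' b, ENNReal.ofReal (f a b)).toReal :=
        (ENNReal.tsum_toReal_eq fun a => tsum_ofReal_ne_top (hf a) (hrow a)).symm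
    _ = (∑' b, ∑' a, ENNReal.ofReal (f a b)).toReal := by rw [ENNReal.tsum_comm]
    _ = ∑' b, (∑' a, ENNReal.ofReal (f a b)).toReal :=
        ENNReal.tsum_toReal_eq fun b => tsum_ofReal_ne_top (fun a => hf a b) (hcol b)
    _ = ∑' b, ∑' a, f a b :=
        tsum_congr fun b => (tsum_eq_toReal_tsum_ofReal (fun a => hf a b) (hcol b)).symm

section WordProb

variable {A : Type*} {P : A → A → ℝ} {π : A → ℝ}

lemma chainProb_nonneg (hP : ∀ a b, 0 ≤ P a b) (b : A) (w : List A) :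
    0 ≤ chainProb P b w := by
  induction w generalizing b with
  | nil => exact zero_le_one
  | cons a w ih => exact mul_nonneg (hP a b) (ih a)

lemma wordProb_nonneg (hP : ∀ a b, 0 ≤ P a b) (hπ : ∀ a, 0 ≤ π a) :
    ∀ w, 0 ≤ wordProb π P w
  | [] => zero_le_one
  | a :: w => mul_nonneg (hπ a) (chainProb_nonneg hP a w)

lemma chainProb_le_pow_length {M : ℝ} (hP : ∀ a b, 0 ≤ P a b) (hPM : ∀ a b, P a b ≤ M)
    (b : A) (w : List A) : chainProb P b w ≤ M ^ w.length := by
  induction w generalizing b with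
  | nil => exact le_rfl
  | cons a w ih =>
    rw [List.length_cons, pow_succ']
    exact mul_le_mul (hPM a b) (ih a) (chainProb_nonneg hP a w) ((hP a b).trans (hPM a b))

lemma wordProb_le_pow_length {M : ℝ} (hP : ∀ a b, 0 ≤ P a b) (hPM : ∀ a b, P a b ≤ M)
    (hπ : ∀ a, 0 ≤ π a) (hπM : ∀ a, π a ≤ M) : ∀ w, wordProb π P w ≤ M ^ w.length
  | [] => le_rfl
  | a :: w => by
    rw [List.length_cons, pow_succ']
    exact mul_le_mul (hπM a) (chainProb_le_pow_length hP hPM a w) (chainProb_nonneg hP a w)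
      ((hπ a).trans (hπM a))

variable [Fintype A]

lemma wordProb_le_one (hP : ∀ a b, 0 ≤ P a b) (hProw : ∀ b, ∑ a, P a b = 1)
    (hπ : ∀ a, 0 ≤ π a) (hπsum : ∑ a, π a = 1) (w : List A) : wordProb π P w ≤ 1 := by
  have hPle : ∀ a b, P a b ≤ 1 := fun a b =>
    hProw b ▸ single_le_sum (fun a _ => hP a b) (mem_univ a)
  have hπle : ∀ a, π a ≤ 1 := fun a =>
    hπsum ▸ single_le_sum (fun a _ => hπ a) (mem_univ a)
  simpa using wordProb_le_pow_length hP hPle hπ hπle w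

lemma sum_chainProb_ofFn (hProw : ∀ b, ∑ a, P a b = 1) :
    ∀ (k : ℕ) (b : A), ∑ v : Fin k → A, chainProb P b (List.ofFn v) = 1
  | 0, b => by simp [chainProb]
  | k + 1, b => by
    rw [← (Fin.consEquiv fun _ => A).sum_comp, Fintype.sum_prod_type]
    simp [Fin.consEquiv, List.ofFn_succ, chainProb, ← mul_sum, sum_chainProb_ofFn hProw k, hProw]

lemma sum_wordProb_ofFn (hProw : ∀ b, ∑ a, P a b = 1) (hπsum : ∑ a, π a = 1) :
    ∀ k : ℕ, ∑ v : Fin k → A, wordProb π P (List.ofFn v) = 1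
  | 0 => by simp [wordProb]
  | k + 1 => by
    rw [← (Fin.consEquiv fun _ => A).sum_comp, Fintype.sum_prod_type]
    simp [Fin.consEquiv, List.ofFn_succ, wordProb, ← mul_sum, sum_chainProb_ofFn hProw k, hπsum]

lemma summable_of_sum_ofFn_le {f : List A → ℝ} (hf : ∀ w, 0 ≤ f w) {u : ℕ → ℝ}
    (hu : Summable u) (hle : ∀ k, ∑ v : Fin k → A, f (List.ofFn v) ≤ u k) : Summable f := by
  rw [← List.equivSigmaTuple.symm.summable_iff]
  refine (summable_sigma_of_nonneg fun _ => hf _).2 ⟨fun _ => .of_finite, ?_⟩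
  refine hu.of_nonneg_of_le (fun k => tsum_nonneg fun _ => hf _) fun k => ?_
  rw [tsum_fintype]
  exact hle k

lemma lt_one_of_pos_of_sum_eq_one (hcard : 2 ≤ Fintype.card A) {f : A → ℝ}
    (hpos : ∀ a, 0 < f a) (hsum : ∑ a, f a = 1) (a : A) : f a < 1 := by
  obtain ⟨b, hba⟩ := Fintype.exists_ne_of_one_lt_card hcard a
  exact hsum ▸ single_lt_sum hba (mem_univ a) (mem_univ b) (hpos b) fun c _ _ => (hpos c).le

lemma exists_bound_lt_one (hcard : 2 ≤ Fintype.card A) (hPpos : ∀ a b, 0 < P a b)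
    (hProw : ∀ b, ∑ a, P a b = 1) (hπpos : ∀ a, 0 < π a) (hπsum : ∑ a, π a = 1) :
    ∃ M, 0 ≤ M ∧ M < 1 ∧ (∀ a b, P a b ≤ M) ∧ ∀ a, π a ≤ M := by
  have : Nonempty A := Fintype.card_pos_iff.1 (by omega)
  obtain ⟨c, hc⟩ := Finite.exists_max fun ab : A × A => max (P ab.1 ab.2) (π ab.1)
  refine ⟨max (P c.1 c.2) (π c.1), (hπpos c.1).le.trans (le_max_right _ _), max_lt ?_ ?_,
    fun a b => ?_, fun a => ?_⟩
  · exact lt_one_of_pos_of_sum_eq_one hcard (fun a => hPpos a c.2) (hProw c.2) c.1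
  · exact lt_one_of_pos_of_sum_eq_one hcard hπpos hπsum c.1
  · exact (le_max_left _ _).trans (hc (a, b))
  · exact (le_max_right _ _).trans (hc (a, a))

lemma summable_wordProb_sq (hcard : 2 ≤ Fintype.card A) (hPpos : ∀ a b, 0 < P a b)
    (hProw : ∀ b, ∑ a, P a b = 1) (hπpos : ∀ a, 0 < π a) (hπsum : ∑ a, π a = 1) :
    Summable fun w => wordProb π P w ^ 2 := by
  obtain ⟨M, hM0, hM1, hPM, hπM⟩ := exists_bound_lt_one hcard hPpos hProw hπpos hπsum
  have hP : ∀ a b, 0 ≤ P a b := fun a b => (hPpos a b).le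
  have hπ : ∀ a, 0 ≤ π a := fun a => (hπpos a).le
  refine summable_of_sum_ofFn_le (fun w => sq_nonneg _)
    (summable_geometric_of_lt_one hM0 hM1) fun k => ?_
  calc ∑ v : Fin k → A, wordProb π P (List.ofFn v) ^ 2
      ≤ ∑ v : Fin k → A, M ^ k * wordProb π P (List.ofFn v) := by
        refine sum_le_sum fun v _ => ?_
        rw [sq]
        refine mul_le_mul_of_nonneg_right ?_ (wordProb_nonneg hP hπ _)
        simpa using wordProb_le_pow_length hP hPM hπ hπM (List.ofFn v)
    _ = M ^ k := by rw [← mul_sum, sum_wordProb_ofFn hProw hπsum, mul_one]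

end WordProb

theorem poisson_transform_of_trie_size_general
    {A : Type*} [Fintype A]
    (hcard : 2 ≤ Fintype.card A)
    (P : A → A → ℝ) (π : A → ℝ)
    (hPpos : ∀ a b, 0 < P a b)
    (hProw : ∀ b, ∑ a, P a b = 1)
    (hπpos : ∀ a, 0 < π a)
    (hπsum : ∑ a, π a = 1)
    (t : ℕ → ℝ)
    (ht : ∀ n, t n = ∑' w : List A,
      (1 - (1 - wordProb π P w) ^ n
        - n * wordProb π P w * (1 - wordProb π P w) ^ (n - 1))) :
    ∀ x : ℝ, 0 ≤ x →
      ∑' n : ℕ, Real.exp (-x) * (x ^ n / n.factorial) * t n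
        = ∑' w : List A,
            (1 - (1 + x * wordProb π P w) * Real.exp (-(x * wordProb π P w))) := by
  intro x hx
  have hp0 : ∀ w, 0 ≤ wordProb π P w :=
    wordProb_nonneg (fun a b => (hPpos a b).le) fun a => (hπpos a).le
  have hp1 : ∀ w, wordProb π P w ≤ 1 :=
    wordProb_le_one (fun a b => (hPpos a b).le) hProw (fun a => (hπpos a).le) hπsum
  have hterm_nonneg : ∀ n w,
      0 ≤ Real.exp (-x) * (x ^ n / n.factorial) * probAtLeastTwo n (wordProb π P w) :=
    fun n w => by have := probAtLeastTwo_nonneg (n := n) (hp0 w) (hp1 w); positivity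
  have hsum_sq := summable_wordProb_sq hcard hPpos hProw hπpos hπsum
  have hsummable_words : ∀ n, Summable fun w => probAtLeastTwo n (wordProb π P w) := fun n =>
    (hsum_sq.mul_left ((n : ℝ) ^ 2)).of_nonneg_of_le
      (fun w => probAtLeastTwo_nonneg (hp0 w) (hp1 w)) fun w => probAtLeastTwo_le (hp0 w) (hp1 w)
  calc ∑' n : ℕ, Real.exp (-x) * (x ^ n / n.factorial) * t n
      = ∑' (n : ℕ) (w : List A),
          Real.exp (-x) * (x ^ n / n.factorial) * probAtLeastTwo n (wordProb π P w) := by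
        simp only [ht, probAtLeastTwo, tsum_mul_left]
    _ = ∑' (w : List A) (n : ℕ),
          Real.exp (-x) * (x ^ n / n.factorial) * probAtLeastTwo n (wordProb π P w) :=
        tsum_comm_of_nonneg hterm_nonneg (fun n => (hsummable_words n).mul_left _)
          fun w => (hasSum_poisson_mul_probAtLeastTwo x _).summable
    _ = _ := tsum_congr fun w => (hasSum_poisson_mul_probAtLeastTwo x _).tsum_eq

/-- The Poisson transform of the average trie size `t_n` equals the Poissonized trie
size: for all `x ≥ 0`,
`∑_{n≥0} e^{-x} (x^n/n!) t_n = ∑_{w∈𝒜*} [1 - (1 + xP(w)) e^{-xP(w)}]`. -/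
theorem poisson_transform_of_trie_size
    {A : Type*} [Fintype A]
    (hcard : 2 ≤ Fintype.card A)
    (P : A → A → ℝ) (π : A → ℝ)
    (hPpos : ∀ a b, 0 < P a b)
    (hProw : ∀ b, ∑ a, P a b = 1)
    (hπpos : ∀ a, 0 < π a)
    (hπsum : ∑ a, π a = 1)
    (hπstat : ∀ a, ∑ b, π b * P a b = π a)
    (t : ℕ → ℝ)
    (ht : ∀ n, t n = ∑' w : List A,
      (1 - (1 - wordProb π P w) ^ n
        - n * wordProb π P w * (1 - wordProb π P w) ^ (n - 1))) :
    ∀ x : ℝ, 0 ≤ x →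
      ∑' n : ℕ, Real.exp (-x) * (x ^ n / n.factorial) * t n
        = ∑' w : List A,
            (1 - (1 + x * wordProb π P w) * Real.exp (-(x * wordProb π P w))) :=
  poisson_transform_of_trie_size_general hcard P π hPpos hProw hπpos hπsum t ht
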